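/- For every k, m ∈ ℕ and letters a, b ∈ {0,1}, for any suffix p of φ^k(a) and any prefix s of φ^k(b), there exists a word z ∈ {0,1}^m such that p · φ^k(z) · s is a factor of the Thue–Morse word t. -/

import Mathlib

/-- Number of occurrences of the second word as a (scattered) subword of the first. -/
def binom {α : Type*} [DecidableEq α] : List α → List α → ℕ
  | _, [] => 1
  | [], _ :: _ => 0
  | a :: u, b :: v => binom u (b :: v) + if a = b then binom u v else 0

/-- k-binomial equivalence. -/
def BinEq (k : ℕ) (u v : List Bool) : Prop :=
  ∀ x : List Bool, x.length ≤ k → binom u x = binom v x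

/-- The Thue–Morse word: `tm n` is the parity of the number of ones
in the binary expansion of `n` (`false` plays the role of the letter 0). -/
def tm (n : ℕ) : Bool := (Nat.digits 2 n).count 1 % 2 == 1

/-- `u` occurs as a (contiguous) factor of the Thue–Morse word. -/
def isFactorTM (u : List Bool) : Prop :=
  ∃ i : ℕ, u = (List.range u.length).map (fun j => tm (i + j))

/-- The Thue–Morse morphism φ(0)=01, φ(1)=10, extended to words. -/
def phiW (w : List Bool) : List Bool :=
  w.flatMap (fun a => if a then [true, false] else [false, true])

/-!
Factors of `t` are the windows `t[i, i + n)`, and `φ` maps the window `t[i, i + n)` onto the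
window `t[2i, 2i + 2n)` because `t(2n) = t(n)` and `t(2n+1) = ¬t(n)`; hence factors are closed
under `φ^k` and under taking factors. Every pair of letters `a, b` occurs in `t` at every distance
`d ≥ 1` (by strong induction on `d`, halving it), so `a z b` is a factor for some `z` of length `m`.
Then `φ^k(a z b) = φ^k(a) φ^k(z) φ^k(b)` is a factor, and it contains `p φ^k(z) s`.
-/

def tmSlice (i n : ℕ) : List Bool := (List.range n).map (fun j => tm (i + j))

@[simp]
lemma tmSlice_length (i n : ℕ) : (tmSlice i n).length = n := by simp [tmSlice]

lemma tmSlice_add (i m n : ℕ) : tmSlice i (m + n) = tmSlice i m ++ tmSlice (i + m) n := by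
  simp [tmSlice, List.range_add, add_assoc]

lemma tmSlice_one (i : ℕ) : tmSlice i 1 = [tm i] := by simp [tmSlice]

lemma tmSlice_two (i : ℕ) : tmSlice i 2 = [tm i, tm (i + 1)] := by simp [tmSlice, List.range_succ]

lemma isFactorTM_tmSlice (i n : ℕ) : isFactorTM (tmSlice i n) := ⟨i, by rw [tmSlice_length]; rfl⟩

lemma isFactorTM.of_infix {u v : List Bool} (huv : u <:+: v) (hv : isFactorTM v) :
    isFactorTM u := by
  obtain ⟨l, r, rfl⟩ := huv
  obtain ⟨i, hi⟩ := hv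
  rw [List.length_append, List.length_append, ← tmSlice, tmSlice_add, tmSlice_add] at hi
  simp only [List.append_assoc] at hi
  obtain ⟨-, hur⟩ := List.append_inj hi (tmSlice_length _ _).symm
  obtain ⟨hu, -⟩ := List.append_inj hur (tmSlice_length _ _).symm
  exact hu ▸ isFactorTM_tmSlice _ _

lemma tm_two_mul (n : ℕ) : tm (2 * n) = tm n := by
  rcases Nat.eq_zero_or_pos n with rfl | hn
  · rfl
  · rw [tm, Nat.digits_def' (by norm_num) (by omega), Nat.mul_mod_right,
      Nat.mul_div_cancel_left _ two_pos]
    simp [tm]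

lemma tm_two_mul_add_one (n : ℕ) : tm (2 * n + 1) = !tm n := by
  rw [tm, Nat.digits_def' (by norm_num) (by omega), show (2 * n + 1) % 2 = 1 by omega,
    show (2 * n + 1) / 2 = n by omega, List.count_cons_self, tm]
  rcases Nat.mod_two_eq_zero_or_one ((Nat.digits 2 n).count 1) with h | h <;>
    simp [h, Nat.add_mod]

lemma phiW_append (u v : List Bool) : phiW (u ++ v) = phiW u ++ phiW v := by
  simp [phiW]

lemma phiW_iterate_append (k : ℕ) (u v : List Bool) :
    phiW^[k] (u ++ v) = phiW^[k] u ++ phiW^[k] v := by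
  induction k generalizing u v with
  | zero => rfl
  | succ k ih => simp only [Function.iterate_succ_apply, phiW_append, ih]

lemma phiW_tmSlice (i n : ℕ) : phiW (tmSlice i n) = tmSlice (2 * i) (2 * n) := by
  induction n with
  | zero => rfl
  | succ n ih =>
    rw [tmSlice_add, phiW_append, ih, tmSlice_one, mul_add, tmSlice_add, tmSlice_two,
      ← mul_add, tm_two_mul, tm_two_mul_add_one]
    cases tm (i + n) <;> rfl

lemma isFactorTM_phiW {w : List Bool} (hw : isFactorTM w) : isFactorTM (phiW w) := by
  obtain ⟨i, hi⟩ := hw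
  rw [← tmSlice] at hi
  rw [hi, phiW_tmSlice]
  exact isFactorTM_tmSlice _ _

lemma isFactorTM_phiW_iterate {w : List Bool} (hw : isFactorTM w) (k : ℕ) :
    isFactorTM (phiW^[k] w) := by
  induction k with
  | zero => exact hw
  | succ k ih => rw [Function.iterate_succ_apply']; exact isFactorTM_phiW ih

lemma exists_tm_eq_and_tm_add_eq {d : ℕ} (hd : 0 < d) (a b : Bool) :
    ∃ i, tm i = a ∧ tm (i + d) = b := by
  induction d using Nat.strong_induction_on generalizing a with
  | _ d ih =>
    rcases Nat.even_or_odd' d with ⟨d', rfl | rfl⟩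
    · obtain ⟨j, hja, hjb⟩ := ih d' (by omega) (by omega) a
      exact ⟨2 * j, by rw [tm_two_mul, hja], by rw [← mul_add, tm_two_mul, hjb]⟩
    · rcases Nat.eq_zero_or_pos d' with rfl | hd'
      · -- `t = 01101001…` has `00, 01, 10, 11` at positions `5, 0, 2, 1`
        cases a <;> cases b
        exacts [⟨5, by norm_num [tm]⟩, ⟨0, by norm_num [tm]⟩, ⟨2, by norm_num [tm]⟩,
          ⟨1, by norm_num [tm]⟩]
      · obtain ⟨j, hja, hjb⟩ := ih (d' + 1) (by omega) (by omega) (!a)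
        refine ⟨2 * j + 1, by rw [tm_two_mul_add_one, hja, Bool.not_not], ?_⟩
        rw [show 2 * j + 1 + (2 * d' + 1) = 2 * (j + (d' + 1)) by ring, tm_two_mul, hjb]

lemma exists_isFactorTM_cons_append_singleton (m : ℕ) (a b : Bool) :
    ∃ z : List Bool, z.length = m ∧ isFactorTM (a :: z ++ [b]) := by
  obtain ⟨i, hia, hib⟩ := exists_tm_eq_and_tm_add_eq (Nat.succ_pos m) a b
  have hwindow : a :: tmSlice (i + 1) m ++ [b] = tmSlice i (1 + m + 1) := by
    subst hia hib
    rw [tmSlice_add, tmSlice_add, tmSlice_one, tmSlice_one, add_comm 1 m]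
    rfl
  refine ⟨tmSlice (i + 1) m, tmSlice_length _ _, ?_⟩
  rw [hwindow]
  exact isFactorTM_tmSlice _ _

theorem factors_appear (k m : ℕ) (a b : Bool) (p s : List Bool)
    (hp : p <:+ phiW^[k] [a]) (hs : s <+: phiW^[k] [b]) :
    ∃ z : List Bool, z.length = m ∧ isFactorTM (p ++ phiW^[k] z ++ s) := by
  obtain ⟨z, hz, hfac⟩ := exists_isFactorTM_cons_append_singleton m a b
  refine ⟨z, hz, (isFactorTM_phiW_iterate hfac k).of_infix ?_⟩
  obtain ⟨l, hl⟩ := hp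
  obtain ⟨r, hr⟩ := hs
  rw [← List.singleton_append, phiW_iterate_append, phiW_iterate_append, ← hl, ← hr]
  exact ⟨l, r, by simp⟩
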